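/- arXiv:1512.06341 — 2 statements merged into one kernel-verified Lean document; each statement's English description precedes it below -/
import Mathlib

section
/- Let Γ̄ be an orbifold group, let ρ̄: Γ̄ → Homeo(S¹) be a μ-faithful non-elementary (μ,τ,σ)-representation, and let ρ̄′: Γ̄ → Homeo(S¹) be a modification of ρ̄ on a periodic gap. Then ρ̄′ has the almost (k)-convergence property if and only if ρ̄ has the almost (k)-convergence property. -/
/-!
Since `ρ` and `ρ'` induce the same action on gaps and agree off the orbit `𝔍` of `I₀` (in
particular on `μ`, so both are `μ`-faithful), the two implications are the same statement.
The stationary and almost-cyclic alternatives transfer by `μ`-faithfulness. In the convergence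
alternative, either some gap of `𝔍` is sent to one fixed gap infinitely often, and then the
elements of the subsequence differ by the stabilizer of a translate of `I₀`, a conjugate of
`⟨cᵢ⟩`, which is the almost-cyclic alternative; or the images of every gap of `𝔍` shrink,
because only finitely many gaps have diameter `≥ ε` (their interiors are disjoint and of
measure `≥ ε / 2`). In the latter case `ρ (γₙ) x` and `ρ' (γₙ) x` lie in a common small gap,
so the uniform convergence of `ρ` passes to `ρ'`.
-/

open Set Filter Topology
open scoped commutatorElement

noncomputable section

namespace PAFlow

/-- The circle, realized as `ℝ / ℤ`. -/
abbrev S1 : Type := AddCircle (1 : ℝ)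

instance {α : Type*} [TopologicalSpace α] : Group (α ≃ₜ α) where
  mul f g := g.trans f
  one := Homeomorph.refl α
  inv := Homeomorph.symm
  mul_assoc f g h := Homeomorph.ext fun _ => rfl
  one_mul f := Homeomorph.ext fun _ => rfl
  mul_one f := Homeomorph.ext fun _ => rfl
  inv_mul_cancel f := Homeomorph.ext fun x => f.symm_apply_apply x

/-- The canonical representative in `[0,1)` of a point of the circle. -/
noncomputable def pos1 (x : S1) : ℝ := (AddCircle.equivIco 1 0 x : ℝ)

/-- The open positively-oriented arc from `a` to `c`; when `a = c` it is the complement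
of `{a}` (full circle minus the point). -/
def oArc (a c : S1) : Set S1 :=
  if a = c then {a}ᶜ else {b : S1 | 0 < pos1 (b - a) ∧ pos1 (b - a) < pos1 (c - a)}

/-- The closed positively-oriented arc from `a` to `c`; when `a = c` it is the whole circle. -/
def cArc (a c : S1) : Set S1 :=
  if a = c then Set.univ else {b : S1 | pos1 (b - a) ≤ pos1 (c - a)}

/-- A homeomorphism of the circle preserves orientation if it preserves
(strict) positively-oriented arcs. -/
def OrientPres (f : S1 ≃ₜ S1) : Prop :=
  ∀ a b c : S1, b ∈ oArc a c → f b ∈ oArc (f a) (f c)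

/-- A homeomorphism of the circle reverses orientation if it reverses
(strict) positively-oriented arcs. -/
def OrientRev (f : S1 ≃ₜ S1) : Prop :=
  ∀ a b c : S1, b ∈ oArc a c → f b ∈ oArc (f c) (f a)

/-- A gap of `μ` is a connected component of the complement of `μ`. -/
def IsGap (μ : Set S1) (I : Set S1) : Prop :=
  ∃ x ∈ μᶜ, I = connectedComponentIn μᶜ x

/-- The type of gaps of `μ`. -/
abbrev Gap (μ : Set S1) : Type := {I : Set S1 // IsGap μ I}

/-- The data of the finite-order homeomorphism `τ : μ → μ`, of order `k`, fixed point free,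
preserving the cyclic order, and such that the closed arcs `[τ^[i] x, τ^[i+1] x]` cover the
circle while the corresponding open arcs are pairwise disjoint. -/
structure TauData (μ : Set S1) (k : ℕ) : Type where
  τ : S1 → S1
  k_pos : 0 < k
  mapsTo : Set.MapsTo τ μ μ
  bijOn : Set.BijOn τ μ μ
  contOn : ContinuousOn τ μ
  fixfree : ∀ x ∈ μ, τ x ≠ x
  order_k : ∀ x ∈ μ, τ^[k] x = x
  ordPres : ∀ x ∈ μ, ∀ y ∈ μ, ∀ z ∈ μ, y ∈ oArc x z → τ y ∈ oArc (τ x) (τ z)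
  arcCover : ∀ x ∈ μ, (⋃ i ∈ Finset.range k, cArc (τ^[i] x) (τ^[i + 1] x)) = Set.univ
  arcDisj : ∀ x ∈ μ, ∀ i < k, ∀ j < k, i ≠ j →
    Disjoint (oArc (τ^[i] x) (τ^[i + 1] x)) (oArc (τ^[j] x) (τ^[j + 1] x))

/-- `ρ` is a `(μ,τ,σ)`-representation. -/
structure IsMTSRep {Γ : Type*} [Group Γ] (ρ : Γ →* (S1 ≃ₜ S1)) (μ : Set S1) (k : ℕ)
    (T : TauData μ k) (σg : Γ →* Equiv.Perm (Gap μ)) : Prop where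
  perfect : Perfect μ
  nonempty : μ.Nonempty
  invariant : ∀ γ : Γ, (ρ γ) '' μ = μ
  minimal : ∀ ν : Set S1, ν.Nonempty → IsClosed ν → (∀ γ : Γ, (ρ γ) '' ν ⊆ ν) → μ ⊆ ν
  orient : ∀ γ : Γ, OrientPres (ρ γ) ∨ OrientRev (ρ γ)
  commPres : ∀ γ : Γ, OrientPres (ρ γ) → ∀ x ∈ μ, ρ γ (T.τ x) = T.τ (ρ γ x)
  commRev : ∀ γ : Γ, OrientRev (ρ γ) → ∀ x ∈ μ, ρ γ (T.τ x) = (T.τ)^[k - 1] (ρ γ x)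
  gapAct : ∀ (γ : Γ) (I : Gap μ), ((σg γ I : Gap μ) : Set S1) = (ρ γ) '' (I : Set S1)

/-- The stabilizer in `Γ` of a gap `I`, for the action `σg` on gaps. -/
def gapStab {Γ : Type*} [Group Γ] {μ : Set S1} (σg : Γ →* Equiv.Perm (Gap μ)) (I : Gap μ) :
    Subgroup Γ where
  carrier := {γ : Γ | σg γ I = I}
  one_mem' := by simp
  mul_mem' := by
    intro x y hx hy
    have hx' : σg x I = I := hx
    have hy' : σg y I = I := hy
    show σg (x * y) I = I
    rw [map_mul, Equiv.Perm.mul_apply, hy', hx']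
  inv_mem' := by
    intro x hx
    have hx' : σg x I = I := hx
    show σg x⁻¹ I = I
    have h : σg x⁻¹ (σg x I) = I := by
      rw [← Equiv.Perm.mul_apply, ← map_mul]; simp
    rw [hx'] at h
    exact h

/-- The union `𝔍` of all the iterates of the gap `I₀`. -/
def gapOrbit {Γ : Type*} [Group Γ] {μ : Set S1} (σg : Γ →* Equiv.Perm (Gap μ))
    (I₀ : Gap μ) : Set S1 :=
  ⋃ γ : Γ, ((σg γ I₀ : Gap μ) : Set S1)

/-- `f` restricts to a homeomorphism of the closure of `I` (the closure being compact,
a continuous bijection of it is automatically a homeomorphism). -/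
def IsClosureHomeo (f : S1 → S1) (I : Set S1) : Prop :=
  ContinuousOn f (closure I) ∧ Set.BijOn f (closure I) (closure I)

/-- `ρ'` is a modification of `ρ` on the gap `I₀` by `f₀` (with respect to the
distinguished element `ci` generating the stabilizer of `I₀`). -/
structure IsModification {Γ : Type*} [Group Γ] (ρ ρ' : Γ →* (S1 ≃ₜ S1)) (μ : Set S1) (k : ℕ)
    (T : TauData μ k) (σg : Γ →* Equiv.Perm (Gap μ)) (I₀ : Gap μ) (ci : Γ)
    (f₀ : S1 → S1) : Prop where
  rep' : IsMTSRep ρ' μ k T σg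
  eq_off : ∀ (γ : Γ) (x : S1), x ∉ gapOrbit σg I₀ → ρ' γ x = ρ γ x
  on_gap : ∀ x ∈ (I₀ : Set S1), ρ' ci x = f₀ x

/-- The (finite) `τ`-orbit of a point. -/
def tauOrbit {μ : Set S1} {k : ℕ} (T : TauData μ k) (x : S1) : Set S1 :=
  {y : S1 | ∃ j < k, (T.τ)^[j] x = y}

/-- The limiting behaviour required of a subsequence in the (k)-convergence property:
there are two `τ`-orbits (of points `xm`, `xp` of `μ`) such that on each compact subset of
the open arc `]τ^[i] xm, τ^[i+1] xm[` the sequence converges uniformly to `τ^[i] xp`. -/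
def KConvSeq (F : ℕ → (S1 ≃ₜ S1)) (μ : Set S1) (k : ℕ) (τ : S1 → S1) : Prop :=
  ∃ xm ∈ μ, ∃ xp ∈ μ, ∀ i < k, ∀ K : Set S1,
    K ⊆ oArc (τ^[i] xm) (τ^[i + 1] xm) → IsCompact K →
      TendstoUniformlyOn (fun n x => (F n) x) (fun _ => τ^[i] xp) atTop K

/-- The (discrete) (k)-convergence property. -/
def HasKConv {Γ : Type*} [Group Γ] (ρ : Γ →* (S1 ≃ₜ S1)) (μ : Set S1) (k : ℕ)
    (τ : S1 → S1) : Prop :=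
  ∀ γs : ℕ → Γ, ∃ φ : ℕ → ℕ, StrictMono φ ∧
    ((∀ m n : ℕ, ρ (γs (φ m)) = ρ (γs (φ n))) ∨
      KConvSeq (fun n => ρ (γs (φ n))) μ k τ)

/-- The almost (k)-convergence property. -/
def HasAlmostKConv {Γ : Type*} [Group Γ] (ρ : Γ →* (S1 ≃ₜ S1)) (μ : Set S1) (k : ℕ)
    (τ : S1 → S1) (σg : Γ →* Equiv.Perm (Gap μ)) : Prop :=
  ∀ γs : ℕ → Γ, ∃ φ : ℕ → ℕ, StrictMono φ ∧
    ((∀ m n : ℕ, ρ (γs (φ m)) = ρ (γs (φ n))) ∨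
      (∃ a γ : Γ, (∃ I : Gap μ, σg γ I = I) ∧
        ∃ p : ℕ → ℤ, ∀ n : ℕ, ρ (γs (φ n)) = ρ (γ ^ (p n) * a)) ∨
      KConvSeq (fun n => ρ (γs (φ n))) μ k τ)

/-- `x` is a topologically attracting fixed point of `f`. -/
def TopAttracting (f : S1 → S1) (x : S1) : Prop :=
  f x = x ∧ ∃ U ∈ 𝓝 x, TendstoUniformlyOn (fun n y => f^[n] y) (fun _ => x) atTop U

/-- `x` is a topologically hyperbolic (attracting or repelling) fixed point of the
homeomorphism `f`. -/
def HypFixed (f : S1 ≃ₜ S1) (x : S1) : Prop :=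
  TopAttracting f x ∨ TopAttracting f.symm x

/-- `x` is a topologically attracting fixed point of `f` within the set `s`. -/
def TopAttractingOn (f : S1 → S1) (s : Set S1) (x : S1) : Prop :=
  f x = x ∧ ∃ U ∈ 𝓝[s] x, TendstoUniformlyOn (fun n y => f^[n] y) (fun _ => x) atTop U

/-- `ρ` is `μ`-faithful. -/
def MuFaithful {Γ : Type*} [Group Γ] (ρ : Γ →* (S1 ≃ₜ S1)) (μ : Set S1) : Prop :=
  ∀ γ : Γ, (∀ x ∈ μ, ρ γ x = x) → γ = 1

/-- `ρ` is non-elementary: it has no finite orbit in the circle. -/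
def NonElementary {Γ : Type*} [Group Γ] (ρ : Γ →* (S1 ≃ₜ S1)) : Prop :=
  ∀ x : S1, ¬ (Set.range fun γ : Γ => ρ γ x).Finite

/-- A presentation of a group `Γ` as the fundamental group of a compact 2-orbifold with
nonempty boundary:  generators `a i`, `b i` (handles, or crosscaps when non-orientable, in
which case the `b i` are trivial), torsion generators `d j` of orders `α j ≥ 2`, and
boundary generators `c i`, `q ≥ 1`, subject to the defining relations; being a presentation
is expressed by the universal lifting property. -/
structure OrbifoldPresentation (Γ : Type*) [Group Γ] : Type _ where
  orientable : Bool
  g : ℕ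
  p : ℕ
  q : ℕ
  a : Fin g → Γ
  b : Fin g → Γ
  d : Fin p → Γ
  c : Fin q → Γ
  α : Fin p → ℕ
  q_pos : 1 ≤ q
  α_two : ∀ j, 2 ≤ α j
  b_trivial : orientable = false → ∀ i, b i = 1
  rel_d : ∀ j, d j ^ (α j) = 1
  rel_long : (List.ofFn c).prod =
    (if orientable then (List.ofFn fun i => ⁅a i, b i⁆).prod
      else (List.ofFn fun i => (a i) ^ 2).prod) * (List.ofFn d).prod
  generates : Subgroup.closure
    (Set.range a ∪ Set.range b ∪ Set.range d ∪ Set.range c) = ⊤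
  liftUnique : ∀ (H : Type) (_ : Group H) (fa fb : Fin g → H) (fd : Fin p → H)
    (fc : Fin q → H),
    (orientable = false → ∀ i, fb i = 1) →
    (∀ j, fd j ^ (α j) = 1) →
    ((List.ofFn fc).prod =
      (if orientable then (List.ofFn fun i => ⁅fa i, fb i⁆).prod
        else (List.ofFn fun i => (fa i) ^ 2).prod) * (List.ofFn fd).prod) →
    ∃! φ : Γ →* H, (∀ i, φ (a i) = fa i) ∧ (∀ i, φ (b i) = fb i) ∧
      (∀ j, φ (d j) = fd j) ∧ (∀ i, φ (c i) = fc i)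

/-- `F : ℝ → ℝ` is a lift of the circle map `f` through the projection `ℝ → ℝ/ℤ`. -/
def IsLiftOf (F : ℝ → ℝ) (f : S1 → S1) : Prop :=
  ∀ x : ℝ, ((F x : ℝ) : S1) = f ((x : ℝ) : S1)

/-- Formal letters for words in the generators of an orbifold group presentation. -/
inductive OLetter (g p : ℕ) : Type
  | ga : Fin g → Bool → OLetter g p
  | gb : Fin g → Bool → OLetter g p
  | gd : Fin p → Bool → OLetter g p

/-- Evaluation of a letter in the group. -/
def evLetter {Γ : Type*} [Group Γ] (P : OrbifoldPresentation Γ) :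
    OLetter P.g P.p → Γ
  | .ga i bb => if bb then (P.a i)⁻¹ else P.a i
  | .gb i bb => if bb then (P.b i)⁻¹ else P.b i
  | .gd j bb => if bb then (P.d j)⁻¹ else P.d j

/-- Evaluation of a word (a list of letters), multiplying from left to right. -/
def evWord {Γ : Type*} [Group Γ] (P : OrbifoldPresentation Γ)
    (w : List (OLetter P.g P.p)) : Γ :=
  (w.map (evLetter P)).prod

/-- A word is admissible if, in the non-orientable case, it uses no `b`-letters. -/
def Admissible {Γ : Type*} [Group Γ] (P : OrbifoldPresentation Γ)
    (w : List (OLetter P.g P.p)) : Prop :=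
  P.orientable = false → ∀ l ∈ w, ∀ (i : Fin P.g) (bb : Bool), l ≠ OLetter.gb i bb

/-- The distinguished word `w₀` representing `c₁`:
`[a₁,b₁]⋯[a_g,b_g]d₁⋯d_p` in the orientable case, `a₁²⋯a_g²d₁⋯d_p` otherwise. -/
def w0 {Γ : Type*} [Group Γ] (P : OrbifoldPresentation Γ) : List (OLetter P.g P.p) :=
  (if P.orientable then
    (List.ofFn fun i : Fin P.g =>
      ([OLetter.ga i false, OLetter.gb i false, OLetter.ga i true, OLetter.gb i true] :
        List (OLetter P.g P.p))).flatten
   else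
    (List.ofFn fun i : Fin P.g =>
      ([OLetter.ga i false, OLetter.ga i false] : List (OLetter P.g P.p))).flatten)
  ++ (List.ofFn fun j : Fin P.p => OLetter.gd j false)

/-- The length `ℓ` of `w₀`. -/
def w0Len {Γ : Type*} [Group Γ] (P : OrbifoldPresentation Γ) : ℕ :=
  (if P.orientable then 4 * P.g else 2 * P.g) + P.p

/-- Iterated images `I_n` of the gap `I₀` under the successive elements of the list `l`:
`I_{n+1} = σ(l_n) I_n`. -/
def gapSeq {Γ : Type*} [Group Γ] {μ : Set S1} (σg : Γ →* Equiv.Perm (Gap μ))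
    (I₀ : Gap μ) (l : List Γ) : ℕ → Gap μ
  | 0 => I₀
  | n + 1 => σg (l.getD n 1) (gapSeq σg I₀ l n)

end PAFlow

namespace PAFlow

open MeasureTheory

section Circle

lemma pos1_zero : pos1 0 = 0 := by
  simpa [pos1] using AddCircle.coe_equivIco_mk_apply (1 : ℝ) 0

lemma continuousAt_pos1 {w : S1} (hw : w ≠ 0) : ContinuousAt pos1 w :=
  continuous_subtype_val.continuousAt.comp
    (AddCircle.continuousAt_equivIco (1 : ℝ) 0 (by simpa using hw))

lemma isOpen_oArc (a c : S1) : IsOpen (oArc a c) := by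
  unfold oArc
  split_ifs
  · exact isOpen_compl_singleton
  · have hcont : ContinuousOn (fun b => pos1 (b - a)) {a}ᶜ := fun b hb =>
      ((continuousAt_pos1 (sub_ne_zero.mpr hb)).comp (f := fun b => b - a)
        (continuous_sub_right a).continuousAt).continuousWithinAt
    convert hcont.isOpen_inter_preimage isOpen_compl_singleton
      (isOpen_Ioo (a := 0) (b := pos1 (c - a))) using 1
    ext b
    refine ⟨fun hb => ⟨?_, hb⟩, fun hb => hb.2⟩
    rintro rfl
    simp [pos1_zero] at hb

lemma dist_coe_le_abs_sub (u v : ℝ) : dist (u : S1) (v : S1) ≤ |u - v| := by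
  rw [dist_eq_norm, ← AddCircle.coe_sub, UnitAddCircle.norm_eq]
  simpa using round_le (u - v) 0

lemma ofReal_sub_le_volume_coe_Ioo {a b : ℝ} (h : b ≤ a + 1) :
    ENNReal.ofReal (b - a) ≤ volume (((↑) : ℝ → S1) '' Ioo a b) := by
  have hmeas : MeasurableSet (((↑) : ℝ → S1) '' Ioo a b) :=
    (QuotientAddGroup.isOpenMap_coe _ isOpen_Ioo).measurableSet
  rw [← (AddCircle.measurePreserving_mk 1 a).measure_preimage hmeas.nullMeasurableSet,
    Measure.restrict_apply (measurableSet_preimage (by fun_prop) hmeas), ← Real.volume_Ioo]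
  exact measure_mono fun r hr => ⟨mem_image_of_mem _ hr, hr.1, hr.2.le.trans h⟩

/-- The chart `equivIco 1 a` is continuous away from `a`, so it maps a preconnected set missing
`a` to an interval of reals, whose projection back to the circle stays inside the set. -/
lemma image_coe_uIcc_subset {U : Set S1} (hU : IsPreconnected U) {a : ℝ}
    (ha : (a : S1) ∉ U) {x y : S1} (hx : x ∈ U) (hy : y ∈ U) :
    ((↑) : ℝ → S1) '' uIcc (AddCircle.equivIco 1 a x : ℝ) (AddCircle.equivIco 1 a y) ⊆ U := by
  set e : S1 → ℝ := fun w => AddCircle.equivIco 1 a w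
  have hcont : ContinuousOn e U := fun w hw =>
    (continuous_subtype_val.continuousAt.comp
      (AddCircle.continuousAt_equivIco (1 : ℝ) a fun h => ha (h ▸ hw))).continuousWithinAt
  have hI : uIcc (e x) (e y) ⊆ e '' U :=
    (isPreconnected_iff_ordConnected.mp (hU.image e hcont)).uIcc_subset
      (mem_image_of_mem e hx) (mem_image_of_mem e hy)
  rintro _ ⟨r, hr, rfl⟩
  obtain ⟨w, hw, rfl⟩ := hI hr
  show (AddCircle.equivIco 1 a).symm (AddCircle.equivIco 1 a w) ∈ U
  rwa [Equiv.symm_apply_apply]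

lemma ofReal_dist_le_volume_interior {U : Set S1} (hU : IsPreconnected U) {x y : S1}
    (hx : x ∈ U) (hy : y ∈ U) : ENNReal.ofReal (dist x y) ≤ volume (interior U) := by
  by_cases hfull : U = univ
  · rw [hfull, interior_univ, AddCircle.measure_univ]
    refine ENNReal.ofReal_le_ofReal ((dist_eq_norm x y).trans_le ?_)
    simpa using (AddCircle.norm_le_half_period (p := (1 : ℝ)) (x := x - y) one_ne_zero).trans
      (by norm_num)
  obtain ⟨z, hz⟩ := (ne_univ_iff_exists_notMem U).mp hfull
  obtain ⟨a, rfl⟩ := QuotientAddGroup.mk_surjective z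
  set u : ℝ := (AddCircle.equivIco 1 a x : ℝ)
  set v : ℝ := (AddCircle.equivIco 1 a y : ℝ)
  have hu := (AddCircle.equivIco 1 a x).2
  have hv := (AddCircle.equivIco 1 a y).2
  have hsub : ((↑) : ℝ → S1) '' Ioo (min u v) (max u v) ⊆ interior U :=
    interior_maximal ((image_mono Ioo_subset_Icc_self).trans (image_coe_uIcc_subset hU hz hx hy))
      (QuotientAddGroup.isOpenMap_coe _ isOpen_Ioo)
  calc ENNReal.ofReal (dist x y) ≤ ENNReal.ofReal (max u v - min u v) := by
        refine ENNReal.ofReal_le_ofReal ?_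
        rw [max_sub_min_eq_abs, abs_sub_comm]
        simpa [u, v] using dist_coe_le_abs_sub u v
    _ ≤ volume (((↑) : ℝ → S1) '' Ioo (min u v) (max u v)) :=
        ofReal_sub_le_volume_coe_Ioo (by grind)
    _ ≤ volume (interior U) := measure_mono hsub

end Circle

section Gaps

variable {μ : Set S1}

lemma Gap.isPreconnected (G : Gap μ) : IsPreconnected (G : Set S1) := by
  obtain ⟨x, -, h⟩ := G.2
  exact h ▸ isPreconnected_connectedComponentIn

lemma Gap.disjoint {G H : Gap μ} (hne : G ≠ H) : Disjoint (G : Set S1) H := by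
  obtain ⟨x, -, hG⟩ := G.2
  obtain ⟨y, -, hH⟩ := H.2
  refine Set.disjoint_left.mpr fun z hzG hzH => hne (Subtype.ext ?_)
  rw [hG] at hzG ⊢
  rw [hH] at hzH ⊢
  rw [connectedComponentIn_eq hzG, connectedComponentIn_eq hzH]

lemma Gap.finite_setOf_le_diam {c : ℝ} (hc : 0 < c) :
    {G : Gap μ | c ≤ Metric.diam (G : Set S1)}.Finite := by
  refine (Measure.finite_const_le_meas_of_disjoint_iUnion volume (ε := ENNReal.ofReal (c / 2))
    (As := fun G : Gap μ => interior (G : Set S1)) (by simpa using hc)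
    (fun _ => isOpen_interior.measurableSet)
    (fun G H hne => (Gap.disjoint hne).mono interior_subset interior_subset)
    (measure_ne_top _ _)).subset fun G hG => ?_
  obtain ⟨x, hx, y, hy, hxy⟩ : ∃ x ∈ (G : Set S1), ∃ y ∈ (G : Set S1), c / 2 < dist x y := by
    by_contra! h
    have hG' : c ≤ Metric.diam (G : Set S1) := hG
    linarith [Metric.diam_le_of_forall_dist_le (by linarith) h]
  exact (ENNReal.ofReal_le_ofReal hxy.le).trans
    (ofReal_dist_le_volume_interior G.isPreconnected hx hy)

lemma eventually_diam_lt_of_finite_fibers {s : ℕ → Gap μ} (hs : ∀ G, {n | s n = G}.Finite)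
    {ε : ℝ} (hε : 0 < ε) : ∀ᶠ n in atTop, Metric.diam (s n : Set S1) < ε := by
  have hfin : {n | ε ≤ Metric.diam (s n : Set S1)}.Finite :=
    ((Gap.finite_setOf_le_diam hε).biUnion fun G _ => hs G).subset fun n hn =>
      mem_biUnion (x := s n) hn rfl
  simpa [Nat.cofinite_eq_atTop] using hfin.eventually_cofinite_notMem

lemma Gap.subset_compl (G : Gap μ) : (G : Set S1) ⊆ μᶜ := by
  obtain ⟨x, -, h⟩ := G.2
  exact h ▸ connectedComponentIn_subset _ _

lemma gapOrbit_subset_compl {Γ : Type*} [Group Γ] (σg : Γ →* Equiv.Perm (Gap μ)) (I₀ : Gap μ) :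
    gapOrbit σg I₀ ⊆ μᶜ :=
  iUnion_subset fun γ => (σg γ I₀).subset_compl

end Gaps

section Representations

variable {Γ : Type*} [Group Γ] {μ : Set S1} {ρ ρ' : Γ →* (S1 ≃ₜ S1)}
  {σg : Γ →* Equiv.Perm (Gap μ)}

lemma MuFaithful.injective (h : MuFaithful ρ μ) : Function.Injective ρ := fun γ γ' he =>
  mul_inv_eq_one.mp (h _ fun x _ => by rw [map_mul, map_inv, he, mul_inv_cancel]; rfl)

lemma MuFaithful.of_eqOn (h : MuFaithful ρ μ) (heq : ∀ γ, ∀ x ∈ μ, ρ' γ x = ρ γ x) :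
    MuFaithful ρ' μ :=
  fun γ hγ => h γ fun x hx => heq γ x hx ▸ hγ x hx

lemma exists_subseq_eq_zpow_mul {I₀ : Gap μ} {c : Γ} (hstab : gapStab σg I₀ = Subgroup.zpowers c)
    {γs : ℕ → Γ} {β : Γ} {G : Gap μ} (hinf : {n | σg (γs n) (σg β I₀) = G}.Infinite) :
    ∃ ψ : ℕ → ℕ, StrictMono ψ ∧ ∃ a γ : Γ, (∃ I : Gap μ, σg γ I = I) ∧
      ∃ p : ℕ → ℤ, ∀ n, γs (ψ n) = γ ^ p n * a := by
  obtain ⟨ψ, hψ, hG⟩ :=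
    extraction_of_frequently_atTop (Nat.frequently_atTop_iff_infinite.mpr hinf)
  set h := γs (ψ 0) * β
  have hc : σg c I₀ = I₀ := (hstab ▸ Subgroup.mem_zpowers c : c ∈ gapStab σg I₀)
  have hmem : ∀ n, h⁻¹ * (γs (ψ n) * β) ∈ Subgroup.zpowers c := fun n => by
    have e : σg (γs (ψ n) * β) I₀ = σg h I₀ := by
      rw [map_mul, Equiv.Perm.mul_apply, hG n, map_mul, Equiv.Perm.mul_apply, hG 0]
    rw [← hstab]
    show σg (h⁻¹ * (γs (ψ n) * β)) I₀ = I₀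
    rw [map_mul, Equiv.Perm.mul_apply, e, ← Equiv.Perm.mul_apply, ← map_mul, inv_mul_cancel,
      map_one, Equiv.Perm.one_apply]
  choose p hp using fun n => Subgroup.mem_zpowers_iff.mp (hmem n)
  refine ⟨ψ, hψ, γs (ψ 0), h * c * h⁻¹, ⟨σg h I₀, ?_⟩, p, fun n => ?_⟩
  · rw [← Equiv.Perm.mul_apply, ← map_mul, inv_mul_cancel_right, map_mul, Equiv.Perm.mul_apply, hc]
  · rw [conj_zpow, hp n]
    simp only [h]
    group

end Representations

section Convergence

variable {Γ : Type*} [Group Γ] {μ : Set S1} {ρ ρ' : Γ →* (S1 ≃ₜ S1)}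
  {σg : Γ →* Equiv.Perm (Gap μ)} {γs : ℕ → Γ}

/-- Gaps meeting `K` are either big, hence finitely many and each eventually mapped to small
gaps, or small, hence inside the `δ`-neighbourhood of `K`, on which `ρ (γs n)` collapses. -/
lemma eventually_forall_diam_image_gap_le
    (hgapAct : ∀ γ I, ((σg γ I : Gap μ) : Set S1) = ρ γ '' (I : Set S1)) {𝒢 : Set (Gap μ)}
    (hfib : ∀ I ∈ 𝒢, ∀ G, {n | σg (γs n) I = G}.Finite) {K : Set S1} {δ : ℝ} (hδ : 0 < δ)
    {c : S1} (hconv : TendstoUniformlyOn (fun n x => ρ (γs n) x) (fun _ => c) atTop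
      (Metric.cthickening δ K)) {ε : ℝ} (hε : 0 < ε) :
    ∀ᶠ n in atTop, ∀ I ∈ 𝒢, ((I : Set S1) ∩ K).Nonempty →
      Metric.diam ((σg (γs n) I : Gap μ) : Set S1) ≤ ε := by
  have hbig : {I | I ∈ 𝒢 ∧ δ ≤ Metric.diam (I : Set S1)}.Finite :=
    (Gap.finite_setOf_le_diam hδ).subset fun I hI => hI.2
  filter_upwards [hbig.eventually_all.mpr fun I hI => eventually_diam_lt_of_finite_fibers
      (hfib I hI.1) hε, Metric.tendstoUniformlyOn_iff.mp hconv (ε / 2) (half_pos hε)]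
    with n hsmall hclose
  rintro I hI ⟨x, hxI, hxK⟩
  by_cases hdiam : δ ≤ Metric.diam (I : Set S1)
  · exact (hsmall I ⟨hI, hdiam⟩).le
  have hIK : (I : Set S1) ⊆ Metric.cthickening δ K := fun z hz =>
    Metric.mem_cthickening_of_dist_le z x δ K hxK
      ((Metric.dist_le_diam_of_mem (Metric.isBounded_of_compactSpace) hz hxI).trans
        (not_le.mp hdiam).le)
  rw [hgapAct]
  refine Metric.diam_le_of_forall_dist_le hε.le ?_
  rintro _ ⟨y, hy, rfl⟩ _ ⟨z, hz, rfl⟩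
  linarith [dist_triangle_left (ρ (γs n) y) (ρ (γs n) z) c, hclose y (hIK hy), hclose z (hIK hz)]

lemma tendstoUniformlyOn_of_eq_off_gapOrbit
    (hgapAct : ∀ γ I, ((σg γ I : Gap μ) : Set S1) = ρ γ '' (I : Set S1))
    (hgapAct' : ∀ γ I, ((σg γ I : Gap μ) : Set S1) = ρ' γ '' (I : Set S1)) {I₀ : Gap μ}
    (heq : ∀ γ x, x ∉ gapOrbit σg I₀ → ρ' γ x = ρ γ x) {K : Set S1} {c : S1}
    (hconv : TendstoUniformlyOn (fun n x => ρ (γs n) x) (fun _ => c) atTop K)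
    (hdiam : ∀ ε > 0, ∀ᶠ n in atTop, ∀ β : Γ, ((σg β I₀ : Set S1) ∩ K).Nonempty →
      Metric.diam ((σg (γs n) (σg β I₀) : Gap μ) : Set S1) ≤ ε) :
    TendstoUniformlyOn (fun n x => ρ' (γs n) x) (fun _ => c) atTop K := by
  rw [Metric.tendstoUniformlyOn_iff] at hconv ⊢
  intro ε hε
  filter_upwards [hconv (ε / 2) (half_pos hε), hdiam (ε / 4) (by positivity)]
    with n hclose hsmall x hx
  by_cases hxJ : x ∈ gapOrbit σg I₀
  · obtain ⟨β, hβ⟩ := mem_iUnion.mp hxJ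
    have hρx : ρ (γs n) x ∈ ((σg (γs n) (σg β I₀) : Gap μ) : Set S1) :=
      hgapAct _ _ ▸ mem_image_of_mem _ hβ
    have hρ'x : ρ' (γs n) x ∈ ((σg (γs n) (σg β I₀) : Gap μ) : Set S1) :=
      hgapAct' _ _ ▸ mem_image_of_mem _ hβ
    have hnear := (Metric.dist_le_diam_of_mem Metric.isBounded_of_compactSpace hρx hρ'x).trans
      (hsmall β ⟨x, hβ, hx⟩)
    linarith [dist_triangle c (ρ (γs n) x) (ρ' (γs n) x), hclose x hx]
  · rw [heq _ _ hxJ]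
    linarith [hclose x hx]

lemma KConvSeq.of_eq_off_gapOrbit
    (hgapAct : ∀ γ I, ((σg γ I : Gap μ) : Set S1) = ρ γ '' (I : Set S1))
    (hgapAct' : ∀ γ I, ((σg γ I : Gap μ) : Set S1) = ρ' γ '' (I : Set S1)) {I₀ : Gap μ}
    (heq : ∀ γ x, x ∉ gapOrbit σg I₀ → ρ' γ x = ρ γ x)
    (hfib : ∀ β G, {n | σg (γs n) (σg β I₀) = G}.Finite) {k : ℕ} {τ : S1 → S1}
    (h : KConvSeq (fun n => ρ (γs n)) μ k τ) : KConvSeq (fun n => ρ' (γs n)) μ k τ := by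
  obtain ⟨xm, hxm, xp, hxp, hconv⟩ := h
  refine ⟨xm, hxm, xp, hxp, fun i hi K hKA hK => ?_⟩
  obtain ⟨δ, hδ, hδA⟩ := hK.exists_thickening_subset_open (isOpen_oArc _ _) hKA
  have hK'A := (Metric.cthickening_subset_thickening' hδ (half_lt_self hδ) K).trans hδA
  refine tendstoUniformlyOn_of_eq_off_gapOrbit hgapAct hgapAct' heq (hconv i hi K hKA hK)
    fun ε hε => ?_
  filter_upwards [eventually_forall_diam_image_gap_le hgapAct (𝒢 := range (σg · I₀))
    (by rintro _ ⟨β, rfl⟩; exact hfib β) (half_pos hδ)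
    (hconv i hi _ hK'A Metric.isClosed_cthickening.isCompact) hε] with n hn β
    using hn _ ⟨β, rfl⟩

lemma HasAlmostKConv.of_eq_off_gapOrbit
    (hgapAct : ∀ γ I, ((σg γ I : Gap μ) : Set S1) = ρ γ '' (I : Set S1))
    (hgapAct' : ∀ γ I, ((σg γ I : Gap μ) : Set S1) = ρ' γ '' (I : Set S1))
    (hfaith : MuFaithful ρ μ) {I₀ : Gap μ} {c : Γ} (hstab : gapStab σg I₀ = Subgroup.zpowers c)
    (heq : ∀ γ x, x ∉ gapOrbit σg I₀ → ρ' γ x = ρ γ x) {k : ℕ} {τ : S1 → S1}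
    (h : HasAlmostKConv ρ μ k τ σg) : HasAlmostKConv ρ' μ k τ σg := by
  intro γs
  obtain ⟨φ, hφ, hstat | ⟨a, γ, hγ, p, hp⟩ | hconv⟩ := h γs
  · exact ⟨φ, hφ, Or.inl fun m n => congrArg ρ' (hfaith.injective (hstat m n))⟩
  · exact ⟨φ, hφ, Or.inr (Or.inl ⟨a, γ, hγ, p, fun n => congrArg ρ' (hfaith.injective (hp n))⟩)⟩
  by_cases hfib : ∀ β G, {n | σg (γs (φ n)) (σg β I₀) = G}.Finite
  · exact ⟨φ, hφ, Or.inr (Or.inr (hconv.of_eq_off_gapOrbit hgapAct hgapAct' heq hfib))⟩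
  push Not at hfib
  obtain ⟨β, G, hinf⟩ := hfib
  obtain ⟨ψ, hψ, a, γ, hγ, p, hp⟩ := exists_subseq_eq_zpow_mul hstab hinf
  exact ⟨φ ∘ ψ, hφ.comp hψ, Or.inr (Or.inl ⟨a, γ, hγ, p, fun n => congrArg ρ' (hp n)⟩)⟩

end Convergence

end PAFlow

open PAFlow in
theorem statement4_general {Γ : Type} [Group Γ] (P : OrbifoldPresentation Γ)
    (ρ : Γ →* (S1 ≃ₜ S1)) (μ : Set S1) (k : ℕ)
    (T : TauData μ k) (σg : Γ →* Equiv.Perm (Gap μ))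
    (hrep : IsMTSRep ρ μ k T σg)
    (hfaith : MuFaithful ρ μ)
    (I₀ : Gap μ)
    (i : Fin P.q) (hstab : gapStab σg I₀ = Subgroup.zpowers (P.c i))
    (f₀ : S1 → S1)
    (ρ' : Γ →* (S1 ≃ₜ S1))
    (hmod : IsModification ρ ρ' μ k T σg I₀ (P.c i) f₀) :
    HasAlmostKConv ρ' μ k T.τ σg ↔ HasAlmostKConv ρ μ k T.τ σg := by
  have hfaith' : MuFaithful ρ' μ := hfaith.of_eqOn fun γ x hx =>
    hmod.eq_off γ x fun hJ => gapOrbit_subset_compl σg I₀ hJ hx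
  exact ⟨.of_eq_off_gapOrbit hmod.rep'.gapAct hrep.gapAct hfaith' hstab
      fun γ x hx => (hmod.eq_off γ x hx).symm,
    .of_eq_off_gapOrbit hrep.gapAct hmod.rep'.gapAct hfaith hstab hmod.eq_off⟩

open PAFlow in
/-- a modification of a `μ`-faithful non-elementary `(μ,τ,σ)`-representation
of an orbifold group on a periodic gap has the almost (k)-convergence property if and only
if the original representation does. -/
theorem statement4 {Γ : Type} [Group Γ] (P : OrbifoldPresentation Γ)
    (ρ : Γ →* (S1 ≃ₜ S1)) (μ : Set S1) (k : ℕ)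
    (T : TauData μ k) (σg : Γ →* Equiv.Perm (Gap μ))
    (hrep : IsMTSRep ρ μ k T σg)
    (hfaith : MuFaithful ρ μ) (hnonel : NonElementary ρ)
    (I₀ : Gap μ) (hper : gapStab σg I₀ ≠ ⊥)
    (i : Fin P.q) (hstab : gapStab σg I₀ = Subgroup.zpowers (P.c i))
    (f₀ : S1 → S1) (hf₀ : IsClosureHomeo f₀ (I₀ : Set S1))
    (hbd : ∀ x ∈ frontier (I₀ : Set S1), f₀ x = ρ (P.c i) x)
    (ρ' : Γ →* (S1 ≃ₜ S1))
    (hmod : IsModification ρ ρ' μ k T σg I₀ (P.c i) f₀) :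
    HasAlmostKConv ρ' μ k T.τ σg ↔ HasAlmostKConv ρ μ k T.τ σg :=
  statement4_general P ρ μ k T σg hrep hfaith I₀ i hstab f₀ ρ' hmod
end
end

section
/- Let Γ be a finitely generated group with a central element h such that Γ̄ = Γ/⟨h⟩ is an orbifold group, and let ρ: Γ → Homeo(ℝ) be a representation with ρ(h) equal to the translation x ↦ x+1, so that ρ induces a (μ,τ,σ)-representation ρ̄ of Γ̄ on the circle S¹ = ℝ/ℤ. Let μ̃ ⊂ ℝ be the preimage of μ under ℝ → ℝ/ℤ. Then every modification ρ̄′ of ρ̄ on a periodic gap lifts to a representation ρ*: Γ → Homeo(ℝ) with ρ*(h) the translation by 1 and inducing ρ̄′ on ℝ/ℤ, and ρ* is uniquely determined by the property that for every γ ∈ Γ the restrictions of ρ*(γ) and ρ(γ) to μ̃ coincide. -/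
open Set Filter Topology
open scoped commutatorElement

noncomputable section

/-!
The modification only changes `ρ̄` inside the orbit `𝔍` of the gap `I₀`, so on the closed
set `M ⊂ ℝ` lying over the complement `C` of `𝔍` the old lift `ρ(γ)` still lifts `ρ̄′(γ̄)`.
Every complementary interval `]a, b[` of `M` is shorter than `1`, and `ρ̄′(γ̄)` preserves
orientation, since it agrees on the (infinite) set `μ` with the orientation-preserving map `ρ̄(γ̄)`.
Hence `ρ(γ)` extends across `]a, b[` by taking, for each `x`, the unique lift of `ρ̄′(γ̄)(x)` in
the window `[ρ(γ)(a), ρ(γ)(a) + 1[`. The extended maps are increasing and compose correctly,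
so they form a representation `ρ*` lifting `ρ̄′`. Uniqueness holds because two continuous lifts
of the same circle map through the covering `ℝ → ℝ/ℤ` that agree at one point coincide.
-/

theorem Perfect.infinite {X : Type*} [TopologicalSpace X] [T1Space X] {s : Set X}
    (hs : Perfect s) (hne : s.Nonempty) : s.Infinite := by
  intro hfin
  obtain ⟨x, hx⟩ := hne
  obtain ⟨y, ⟨hyU, hys⟩, hyx⟩ := accPt_iff_nhds.1 (hs.acc x hx) _
    ((hfin.sdiff (t := {x})).isClosed.isOpen_compl.mem_nhds fun h => h.2 rfl)
  exact hyU ⟨hys, hyx⟩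

namespace PAFlow

instance : LocallyPathConnectedSpace S1 :=
  (QuotientAddGroup.isQuotientMap_mk _).locallyPathConnectedSpace

lemma homeo_mul_apply {X : Type*} [TopologicalSpace X] (f g : X ≃ₜ X) (x : X) :
    (f * g) x = f (g x) := rfl

lemma homeo_one_apply {X : Type*} [TopologicalSpace X] (x : X) : (1 : X ≃ₜ X) x = x := rfl

lemma strictMono_of_map_add_one (e : ℝ ≃ₜ ℝ) (he : ∀ x, e (x + 1) = e x + 1) :
    StrictMono e :=
  (e.continuous.strictMono_of_inj e.injective).resolve_right fun hanti => by
    have := hanti (zero_lt_one' ℝ)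
    rw [← zero_add (1 : ℝ), he] at this
    linarith

lemma IsLiftOf.eq_of_apply_eq {F F' : ℝ → ℝ} {f : S1 → S1} (hF : Continuous F)
    (hF' : Continuous F') (h : IsLiftOf F f) (h' : IsLiftOf F' f) {t : ℝ} (ht : F t = F' t) :
    F = F' :=
  (AddCircle.isCoveringMap_coe 1).eq_of_comp_eq hF hF' (funext fun x => (h x).trans (h' x).symm)
    t ht

lemma exists_coe_eq_mem_Ico (t : ℝ) (b : S1) : ∃ y ∈ Ico t (t + 1), (y : S1) = b :=
  ⟨_, (AddCircle.equivIco 1 t b).2, AddCircle.coe_equivIco⟩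

lemma exists_coe_eq_mem_Ioc (t : ℝ) (b : S1) : ∃ y ∈ Ioc t (t + 1), (y : S1) = b :=
  ⟨_, (AddCircle.equivIoc 1 t b).2, AddCircle.coe_equivIoc⟩

lemma pos1_mem_Ico (s : S1) : pos1 s ∈ Ico 0 1 := by
  simpa [pos1] using (AddCircle.equivIco 1 0 s).2

lemma coe_pos1 (s : S1) : ((pos1 s : ℝ) : S1) = s := AddCircle.coe_equivIco

lemma pos1_coe_sub_coe {t y : ℝ} (hty : t ≤ y) (hyt : y < t + 1) :
    pos1 ((y : S1) - (t : S1)) = y - t := by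
  rw [← AddCircle.coe_sub, pos1, AddCircle.equivIco_coe_of_mem ⟨by linarith, by linarith⟩]

/-- Arcs from a point `t` are read off in the window `[t, t + 1[`; taking the endpoint `u` in
`]t, t + 1]` covers the degenerate arc `oArc t t` as `u = t + 1`. -/
lemma coe_mem_oArc_coe_iff {t u y : ℝ} (htu : t < u) (hut : u ≤ t + 1) (hty : t ≤ y)
    (hyt : y < t + 1) : (y : S1) ∈ oArc t u ↔ t < y ∧ y < u := by
  have hy : y ∈ Ico t (t + 1) := ⟨hty, hyt⟩
  rcases hut.lt_or_eq with hut | rfl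
  · have hne : (t : S1) ≠ u := by
      rw [Ne, AddCircle.coe_eq_coe_iff_of_mem_Ico ⟨le_rfl, by linarith⟩ ⟨htu.le, hut⟩]
      exact htu.ne
    rw [oArc, if_neg hne, mem_ofPred_eq, pos1_coe_sub_coe hty hyt, pos1_coe_sub_coe htu.le hut]
    constructor <;> rintro ⟨h1, h2⟩ <;> constructor <;> linarith
  · rw [AddCircle.coe_add_period, oArc, if_pos rfl, mem_compl_singleton_iff, Ne,
      AddCircle.coe_eq_coe_iff_of_mem_Ico hy ⟨le_rfl, by linarith⟩]
    exact ⟨fun h => ⟨lt_of_le_of_ne hty (Ne.symm h), hyt⟩, fun h => h.1.ne'⟩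

lemma mem_oArc_or_mem_oArc {a b c : S1} (hab : a ≠ b) (hbc : b ≠ c) (hac : a ≠ c) :
    b ∈ oArc a c ∨ b ∈ oArc c a := by
  obtain ⟨t, rfl⟩ := QuotientAddGroup.mk_surjective a
  obtain ⟨y, hy, rfl⟩ := exists_coe_eq_mem_Ico t b
  obtain ⟨u, hu, rfl⟩ := exists_coe_eq_mem_Ico t c
  have hty : t < y := hy.1.lt_of_ne fun h => hab (congrArg _ h)
  have htu : t < u := hu.1.lt_of_ne fun h => hac (congrArg _ h)
  rcases lt_or_gt_of_ne (fun h : y = u => hbc (congrArg _ h)) with hyu | huy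
  · exact .inl ((coe_mem_oArc_coe_iff htu hu.2.le hy.1 hy.2).2 ⟨hty, hyu⟩)
  · right
    rw [← AddCircle.coe_add_period 1 t]
    exact (coe_mem_oArc_coe_iff (by linarith [hu.2]) (by linarith) huy.le (by linarith [hy.2])).2
      ⟨huy, hy.2⟩

lemma notMem_oArc_of_mem_oArc {a b c : S1} (hac : a ≠ c) (h : b ∈ oArc a c) : b ∉ oArc c a := by
  obtain ⟨t, rfl⟩ := QuotientAddGroup.mk_surjective a
  obtain ⟨y, hy, rfl⟩ := exists_coe_eq_mem_Ico t b
  obtain ⟨u, hu, rfl⟩ := exists_coe_eq_mem_Ioc t c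
  have hut : u < t + 1 := hu.2.lt_of_ne fun h => hac (by rw [h, AddCircle.coe_add_period])
  obtain ⟨hty, hyu⟩ := (coe_mem_oArc_coe_iff hu.1 hu.2 hy.1 hy.2).1 h
  rw [← AddCircle.coe_add_period 1 t, ← AddCircle.coe_add_period 1 y,
    coe_mem_oArc_coe_iff hut (by linarith [hu.1]) (by linarith) (by linarith)]
  exact fun h' => by linarith [h'.2]

lemma orientPres_of_isLiftOf {F : ℝ → ℝ} (hF : StrictMono F) (hF1 : ∀ x, F (x + 1) = F x + 1)
    {f : S1 ≃ₜ S1} (hFf : IsLiftOf F f) : OrientPres f := by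
  intro a b c hb
  obtain ⟨t, rfl⟩ := QuotientAddGroup.mk_surjective a
  obtain ⟨y, hy, rfl⟩ := exists_coe_eq_mem_Ico t b
  obtain ⟨u, hu, rfl⟩ := exists_coe_eq_mem_Ioc t c
  obtain ⟨hty, hyu⟩ := (coe_mem_oArc_coe_iff hu.1 hu.2 hy.1 hy.2).1 hb
  have hFu : F u ≤ F t + 1 := hF1 t ▸ hF.monotone hu.2
  rw [← hFf, ← hFf, ← hFf, coe_mem_oArc_coe_iff (hF hu.1) hFu (hF hty).le
    ((hF hyu).trans_le hFu)]
  exact ⟨hF hty, hF hyu⟩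

lemma OrientPres.of_eqOn {f g : S1 ≃ₜ S1} (hf : OrientPres f) (hg : OrientPres g ∨ OrientRev g)
    {a b c : S1} (hab : a ≠ b) (hbc : b ≠ c) (hac : a ≠ c) (hfg : EqOn f g {a, b, c}) :
    OrientPres g := by
  refine hg.resolve_right fun hrev => ?_
  have key : ∀ a c, a ≠ c → f a = g a → f c = g c → b ∈ oArc a c → False := by
    intro a c hac ha hc hb
    have hrb := hrev a b c hb
    rw [← ha, ← hc, ← hfg (by simp)] at hrb
    exact notMem_oArc_of_mem_oArc (f.injective.ne hac) (hf a b c hb) hrb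
  rcases mem_oArc_or_mem_oArc hab hbc hac with hb | hb
  · exact key a c hac (hfg (by simp)) (hfg (by simp)) hb
  · exact key c a hac.symm (hfg (by simp)) (hfg (by simp)) hb

section GapEnds

/-- For `x` outside the preimage of `C`, `]lowerEnd C x, upperEnd C x[` is the complementary
interval of that preimage containing `x`. -/
def lowerEnd (C : Set S1) (x : ℝ) : ℝ := sSup (((↑) : ℝ → S1) ⁻¹' C ∩ Iic x)

def upperEnd (C : Set S1) (x : ℝ) : ℝ := sInf (((↑) : ℝ → S1) ⁻¹' C ∩ Ici x)

variable {C : Set S1} {x t : ℝ}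

lemma le_lowerEnd (ht : (t : S1) ∈ C) (htx : t ≤ x) : t ≤ lowerEnd C x :=
  le_csSup ⟨x, fun _ h => h.2⟩ ⟨ht, htx⟩

lemma upperEnd_le (ht : (t : S1) ∈ C) (hxt : x ≤ t) : upperEnd C x ≤ t :=
  csInf_le ⟨x, fun _ h => h.2⟩ ⟨ht, hxt⟩

lemma lowerEnd_mem (hC : IsClosed C) (hne : C.Nonempty) :
    (lowerEnd C x : S1) ∈ C ∧ lowerEnd C x ≤ x := by
  obtain ⟨c, hc⟩ := hne
  obtain ⟨y, hy, rfl⟩ := exists_coe_eq_mem_Ioc (x - 1) c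
  exact ((hC.preimage continuous_quotient_mk').inter isClosed_Iic).csSup_mem
    ⟨y, hc, by simpa using hy.2⟩ ⟨x, fun _ h => h.2⟩

lemma upperEnd_mem (hC : IsClosed C) (hne : C.Nonempty) :
    (upperEnd C x : S1) ∈ C ∧ x ≤ upperEnd C x := by
  obtain ⟨c, hc⟩ := hne
  obtain ⟨y, hy, rfl⟩ := exists_coe_eq_mem_Ico x c
  exact ((hC.preimage continuous_quotient_mk').inter isClosed_Ici).csInf_mem
    ⟨y, hc, hy.1⟩ ⟨x, fun _ h => h.2⟩

lemma lowerEnd_eq_self (hx : (x : S1) ∈ C) : lowerEnd C x = x :=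
  le_antisymm (csSup_le ⟨x, hx, mem_Iic.2 le_rfl⟩ fun _ h => h.2) (le_lowerEnd hx le_rfl)

lemma lowerEnd_lt (hC : IsClosed C) (hne : C.Nonempty) (hx : (x : S1) ∉ C) : lowerEnd C x < x :=
  (lowerEnd_mem hC hne).2.lt_of_ne fun h => hx (h ▸ (lowerEnd_mem hC hne).1)

lemma lt_upperEnd (hC : IsClosed C) (hne : C.Nonempty) (hx : (x : S1) ∉ C) : x < upperEnd C x :=
  (upperEnd_mem hC hne).2.lt_of_ne fun h => hx (h ▸ (upperEnd_mem hC hne).1)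

lemma lowerEnd_eq_of_forall_notMem {a : ℝ} (ha : (a : S1) ∈ C) (hax : a ≤ x)
    (hgap : ∀ t, a < t → t ≤ x → (t : S1) ∉ C) : lowerEnd C x = a :=
  le_antisymm (csSup_le ⟨a, ha, mem_Iic.2 hax⟩ fun t ht => not_lt.1 fun hat => hgap t hat ht.2 ht.1)
    (le_lowerEnd ha hax)

lemma coe_notMem_of_mem_Ioo (ht : t ∈ Ioo (lowerEnd C x) (upperEnd C x)) : (t : S1) ∉ C := by
  intro htC
  rcases le_or_gt t x with htx | hxt
  · exact (le_lowerEnd htC htx).not_gt ht.1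
  · exact (upperEnd_le htC hxt.le).not_gt ht.2

lemma lt_lowerEnd_add_one (hC : IsClosed C) (hne : C.Nonempty) : x < lowerEnd C x + 1 := by
  by_contra! h
  have hmem : ((lowerEnd C x + 1 : ℝ) : S1) ∈ C := by
    rw [AddCircle.coe_add_period]; exact (lowerEnd_mem hC hne).1
  linarith [le_lowerEnd hmem h]

lemma upperEnd_lt_lowerEnd_add_one (hC : IsClosed C) (hnt : C.Nontrivial) :
    upperEnd C x < lowerEnd C x + 1 := by
  set a := lowerEnd C x
  have ha : ((a + 1 : ℝ) : S1) ∈ C := by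
    rw [AddCircle.coe_add_period]; exact (lowerEnd_mem hC hnt.nonempty).1
  refine (upperEnd_le ha (lt_lowerEnd_add_one hC hnt.nonempty).le).lt_of_ne fun heq => ?_
  have hsub : ∀ e ∈ C, e = (a : S1) := by
    intro e he
    obtain ⟨y, ⟨hay, hya⟩, rfl⟩ := exists_coe_eq_mem_Ico a e
    rcases hay.lt_or_eq with hay | rfl
    · exact absurd he (coe_notMem_of_mem_Ioo ⟨hay, heq ▸ hya⟩)
    · rfl
  obtain ⟨c, hc, d, hd, hcd⟩ := hnt
  exact hcd ((hsub c hc).trans (hsub d hd).symm)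

end GapEnds

lemma IsGap.isOpen {μ I : Set S1} (hμ : IsClosed μ) (hI : IsGap μ I) : IsOpen I := by
  obtain ⟨x, -, rfl⟩ := hI
  exact hμ.isOpen_compl.connectedComponentIn

lemma IsGap.subset_compl {μ I : Set S1} (hI : IsGap μ I) : I ⊆ μᶜ := by
  obtain ⟨x, -, rfl⟩ := hI
  exact connectedComponentIn_subset _ _

section GapOrbit

variable {Γ : Type*} [Group Γ] {μ : Set S1} {σg : Γ →* Equiv.Perm (Gap μ)}

lemma isOpen_gapOrbit (hμ : IsClosed μ) (I₀ : Gap μ) : IsOpen (gapOrbit σg I₀) :=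
  isOpen_iUnion fun γ => (σg γ I₀).2.isOpen hμ

lemma subset_compl_gapOrbit (I₀ : Gap μ) : μ ⊆ (gapOrbit σg I₀)ᶜ :=
  subset_compl_comm.1 (iUnion_subset fun γ => (σg γ I₀).2.subset_compl)

lemma IsMTSRep.mapsTo_compl_gapOrbit {ρ : Γ →* (S1 ≃ₜ S1)} {k : ℕ} {T : TauData μ k}
    (hρ : IsMTSRep ρ μ k T σg) (I₀ : Gap μ) (γ : Γ) :
    MapsTo (ρ γ) (gapOrbit σg I₀)ᶜ (gapOrbit σg I₀)ᶜ := by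
  intro x hx hγx
  obtain ⟨δ, hδ⟩ := mem_iUnion.1 hγx
  refine hx (mem_iUnion.2 ⟨γ⁻¹ * δ, ?_⟩)
  rw [map_mul, Equiv.Perm.mul_apply, hρ.gapAct]
  refine ⟨ρ γ x, hδ, ?_⟩
  rw [← homeo_mul_apply, ← map_mul, inv_mul_cancel, map_one, homeo_one_apply]

end GapOrbit

structure LiftsOver {G : Type*} [Group G] (ρ : G →* (ℝ ≃ₜ ℝ)) (f : G →* (S1 ≃ₜ S1))
    (C : Set S1) : Prop where
  isClosed : IsClosed C
  nontrivial : C.Nontrivial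
  map_add_one : ∀ γ x, ρ γ (x + 1) = ρ γ x + 1
  mapsTo : ∀ γ, MapsTo (f γ) C C
  apply_coe : ∀ γ (t : ℝ), (t : S1) ∈ C → f γ t = (ρ γ t : S1)
  orientPres : ∀ γ, OrientPres (f γ)

/-- The lift of `f γ` at `x` in the window `[ρ γ a, ρ γ a + 1[`, where `a = lowerEnd C x`. -/
def liftAcrossGaps {G : Type*} [Group G] (ρ : G →* (ℝ ≃ₜ ℝ)) (f : G →* (S1 ≃ₜ S1))
    (C : Set S1) (γ : G) (x : ℝ) : ℝ :=
  ρ γ (lowerEnd C x) + pos1 (f γ x - (ρ γ (lowerEnd C x) : S1))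

section LiftAcrossGaps

variable {G : Type*} [Group G] {ρ : G →* (ℝ ≃ₜ ℝ)} {f : G →* (S1 ≃ₜ S1)} {C : Set S1}
  {γ δ : G} {x m : ℝ}

lemma isLiftOf_liftAcrossGaps (γ : G) : IsLiftOf (liftAcrossGaps ρ f C γ) (f γ) := by
  intro x
  rw [liftAcrossGaps, AddCircle.coe_add, coe_pos1, add_sub_cancel]

lemma liftAcrossGaps_mem_Ico :
    liftAcrossGaps ρ f C γ x ∈ Ico (ρ γ (lowerEnd C x)) (ρ γ (lowerEnd C x) + 1) := by
  have := pos1_mem_Ico (f γ x - (ρ γ (lowerEnd C x) : S1))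
  rw [liftAcrossGaps]
  exact ⟨by linarith [this.1], by linarith [this.2]⟩

lemma liftAcrossGaps_eq_of_coe_eq {y : ℝ} (hy : (y : S1) = f γ x)
    (hyI : y ∈ Ico (ρ γ (lowerEnd C x)) (ρ γ (lowerEnd C x) + 1)) :
    liftAcrossGaps ρ f C γ x = y := by
  rw [liftAcrossGaps, ← hy, pos1_coe_sub_coe hyI.1 hyI.2, add_sub_cancel]

namespace LiftsOver

lemma strictMono (H : LiftsOver ρ f C) (γ : G) : StrictMono (ρ γ) :=
  strictMono_of_map_add_one _ (H.map_add_one γ)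

lemma coe_apply_mem (H : LiftsOver ρ f C) (γ : G) {t : ℝ} (ht : (t : S1) ∈ C) :
    (ρ γ t : S1) ∈ C :=
  H.apply_coe γ t ht ▸ H.mapsTo γ ht

lemma liftAcrossGaps_of_mem (H : LiftsOver ρ f C) (hx : (x : S1) ∈ C) :
    liftAcrossGaps ρ f C γ x = ρ γ x := by
  refine liftAcrossGaps_eq_of_coe_eq (H.apply_coe γ x hx).symm ?_
  rw [lowerEnd_eq_self hx]
  exact ⟨le_rfl, by linarith⟩

lemma liftAcrossGaps_mem_Ioo (H : LiftsOver ρ f C) (hx : (x : S1) ∉ C) :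
    liftAcrossGaps ρ f C γ x ∈ Ioo (ρ γ (lowerEnd C x)) (ρ γ (upperEnd C x)) := by
  have hne := H.nontrivial.nonempty
  have hax := lowerEnd_lt H.isClosed hne hx
  have hxb := lt_upperEnd H.isClosed hne hx
  have hba := upperEnd_lt_lowerEnd_add_one (x := x) H.isClosed H.nontrivial
  have harc := H.orientPres γ _ _ _
    ((coe_mem_oArc_coe_iff (hax.trans hxb) hba.le hax.le (hxb.trans hba)).2 ⟨hax, hxb⟩)
  rw [H.apply_coe γ _ (lowerEnd_mem H.isClosed hne).1, H.apply_coe γ _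
    (upperEnd_mem H.isClosed hne).1, ← isLiftOf_liftAcrossGaps γ x] at harc
  have hρba : ρ γ (upperEnd C x) < ρ γ (lowerEnd C x) + 1 :=
    H.map_add_one γ _ ▸ H.strictMono γ hba
  exact (coe_mem_oArc_coe_iff (H.strictMono γ (hax.trans hxb)) hρba.le liftAcrossGaps_mem_Ico.1
    liftAcrossGaps_mem_Ico.2).1 harc

lemma liftAcrossGaps_lt_of_lt (H : LiftsOver ρ f C) (hm : (m : S1) ∈ C) (hxm : x < m) :
    liftAcrossGaps ρ f C γ x < ρ γ m := by
  by_cases hx : (x : S1) ∈ C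
  · rw [H.liftAcrossGaps_of_mem hx]; exact H.strictMono γ hxm
  · exact (H.liftAcrossGaps_mem_Ioo hx).2.trans_le
      ((H.strictMono γ).monotone (upperEnd_le hm hxm.le))

lemma lt_liftAcrossGaps_of_lt (H : LiftsOver ρ f C) (hm : (m : S1) ∈ C) (hmx : m < x) :
    ρ γ m < liftAcrossGaps ρ f C γ x := by
  by_cases hx : (x : S1) ∈ C
  · rw [H.liftAcrossGaps_of_mem hx]; exact H.strictMono γ hmx
  · exact ((H.strictMono γ).monotone (le_lowerEnd hm hmx.le)).trans_lt
      (H.liftAcrossGaps_mem_Ioo hx).1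

lemma le_liftAcrossGaps_of_le (H : LiftsOver ρ f C) (hm : (m : S1) ∈ C) (hmx : m ≤ x) :
    ρ γ m ≤ liftAcrossGaps ρ f C γ x := by
  rcases hmx.lt_or_eq with hmx | rfl
  · exact (H.lt_liftAcrossGaps_of_lt hm hmx).le
  · exact (H.liftAcrossGaps_of_mem hm).ge

/-- Inside one complementary interval the order is read off on the circle, where `f γ`
preserves orientation. -/
lemma liftAcrossGaps_lt_of_lowerEnd_eq (H : LiftsOver ρ f C) {x₁ x₂ : ℝ}
    (hx₁ : (x₁ : S1) ∉ C) (hx₂ : (x₂ : S1) ∉ C) (h12 : x₁ < x₂)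
    (ha : lowerEnd C x₁ = lowerEnd C x₂) :
    liftAcrossGaps ρ f C γ x₁ < liftAcrossGaps ρ f C γ x₂ := by
  have hne := H.nontrivial.nonempty
  set a := lowerEnd C x₁
  have hax₁ : a < x₁ := lowerEnd_lt H.isClosed hne hx₁
  have hx₂a : x₂ < a + 1 := ha ▸ lt_lowerEnd_add_one H.isClosed hne
  have harc := H.orientPres γ _ _ _
    ((coe_mem_oArc_coe_iff (hax₁.trans h12) hx₂a.le hax₁.le (h12.trans hx₂a)).2 ⟨hax₁, h12⟩)
  rw [H.apply_coe γ _ (lowerEnd_mem H.isClosed hne).1, ← isLiftOf_liftAcrossGaps γ x₁,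
    ← isLiftOf_liftAcrossGaps γ x₂] at harc
  have h₂ := H.liftAcrossGaps_mem_Ioo (γ := γ) hx₂
  rw [← ha] at h₂
  have h₂' : liftAcrossGaps ρ f C γ x₂ ≤ ρ γ a + 1 :=
    (h₂.2.trans (H.map_add_one γ a ▸ H.strictMono γ
      (ha ▸ upperEnd_lt_lowerEnd_add_one H.isClosed H.nontrivial))).le
  exact ((coe_mem_oArc_coe_iff h₂.1 h₂' liftAcrossGaps_mem_Ico.1
    liftAcrossGaps_mem_Ico.2).1 harc).2

lemma strictMono_liftAcrossGaps (H : LiftsOver ρ f C) (γ : G) :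
    StrictMono (liftAcrossGaps ρ f C γ) := by
  intro x₁ x₂ h12
  by_cases hm : ∃ m : ℝ, (m : S1) ∈ C ∧ x₁ ≤ m ∧ m ≤ x₂
  · obtain ⟨m, hm, h1m, hm2⟩ := hm
    rcases h1m.lt_or_eq with h1m | rfl
    · exact (H.liftAcrossGaps_lt_of_lt hm h1m).trans_le (H.le_liftAcrossGaps_of_le hm hm2)
    · rw [H.liftAcrossGaps_of_mem hm]; exact H.lt_liftAcrossGaps_of_lt hm h12
  · push Not at hm
    have hne := H.nontrivial.nonempty
    have hx₁ : (x₁ : S1) ∉ C := fun h => (hm x₁ h le_rfl).not_gt h12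
    have hx₂ : (x₂ : S1) ∉ C := fun h => (hm x₂ h h12.le).false
    obtain ⟨ha₁C, ha₁⟩ := lowerEnd_mem (x := x₁) H.isClosed hne
    obtain ⟨ha₂C, ha₂⟩ := lowerEnd_mem (x := x₂) H.isClosed hne
    have ha₂x₁ : lowerEnd C x₂ ≤ x₁ := not_lt.1 fun h => (hm _ ha₂C h.le).not_ge ha₂
    exact H.liftAcrossGaps_lt_of_lowerEnd_eq hx₁ hx₂ h12
      (le_antisymm (le_lowerEnd ha₁C (ha₁.trans h12.le)) (le_lowerEnd ha₂C ha₂x₁))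

/-- `ρ δ` is an increasing bijection of the preimage of `C`, so it carries complementary
intervals onto complementary intervals. -/
lemma lowerEnd_liftAcrossGaps (H : LiftsOver ρ f C) :
    lowerEnd C (liftAcrossGaps ρ f C δ x) = ρ δ (lowerEnd C x) := by
  have hne := H.nontrivial.nonempty
  by_cases hx : (x : S1) ∈ C
  · rw [H.liftAcrossGaps_of_mem hx, lowerEnd_eq_self hx, lowerEnd_eq_self (H.coe_apply_mem δ hx)]
  obtain ⟨hlow, hupp⟩ := H.liftAcrossGaps_mem_Ioo (γ := δ) hx
  refine lowerEnd_eq_of_forall_notMem (H.coe_apply_mem δ (lowerEnd_mem H.isClosed hne).1)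
    hlow.le fun t ht htL htC => ?_
  have hinv : ρ δ (ρ δ⁻¹ t) = t := by
    rw [← homeo_mul_apply, ← map_mul, mul_inv_cancel, map_one, homeo_one_apply]
  refine coe_notMem_of_mem_Ioo (C := C) (x := x) ⟨?_, ?_⟩ (H.coe_apply_mem δ⁻¹ htC)
  · exact (H.strictMono δ).lt_iff_lt.1 (by rwa [hinv])
  · exact (H.strictMono δ).lt_iff_lt.1 (by rw [hinv]; exact htL.trans_lt hupp)

lemma liftAcrossGaps_mul (H : LiftsOver ρ f C) (γ δ : G) (x : ℝ) :
    liftAcrossGaps ρ f C (γ * δ) x = liftAcrossGaps ρ f C γ (liftAcrossGaps ρ f C δ x) := by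
  refine liftAcrossGaps_eq_of_coe_eq ?_ ?_
  · rw [isLiftOf_liftAcrossGaps, isLiftOf_liftAcrossGaps, map_mul, homeo_mul_apply]
  · have hI := liftAcrossGaps_mem_Ico (ρ := ρ) (f := f) (C := C) (γ := γ)
      (x := liftAcrossGaps ρ f C δ x)
    rwa [H.lowerEnd_liftAcrossGaps, ← homeo_mul_apply, ← map_mul] at hI

lemma liftAcrossGaps_one (H : LiftsOver ρ f C) (x : ℝ) : liftAcrossGaps ρ f C 1 x = x := by
  have hne := H.nontrivial.nonempty
  refine liftAcrossGaps_eq_of_coe_eq (by rw [map_one, homeo_one_apply]) ?_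
  rw [map_one, homeo_one_apply]
  exact ⟨(lowerEnd_mem H.isClosed hne).2, lt_lowerEnd_add_one H.isClosed hne⟩

theorem exists_monoidHom (H : LiftsOver ρ f C) :
    ∃ ρs : G →* (ℝ ≃ₜ ℝ), (∀ γ, IsLiftOf (ρs γ) (f γ)) ∧
      ∀ γ (t : ℝ), (t : S1) ∈ C → ρs γ t = ρ γ t := by
  have hsurj (γ : G) : Function.Surjective (liftAcrossGaps ρ f C γ) := fun y =>
    ⟨liftAcrossGaps ρ f C γ⁻¹ y, by
      rw [← H.liftAcrossGaps_mul, mul_inv_cancel, H.liftAcrossGaps_one]⟩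
  let e (γ : G) : ℝ ≃ₜ ℝ :=
    ((H.strictMono_liftAcrossGaps γ).orderIsoOfSurjective _ (hsurj γ)).toHomeomorph
  exact ⟨MonoidHom.mk' e fun γ δ => Homeomorph.ext (H.liftAcrossGaps_mul γ δ),
    fun γ => isLiftOf_liftAcrossGaps γ, fun γ _ ht => H.liftAcrossGaps_of_mem ht⟩

end LiftsOver

end LiftAcrossGaps

end PAFlow

open PAFlow in
theorem statement11_general {Γ Γb : Type} [Group Γ] [Group Γb]
    (h : Γ) (hcentral : ∀ γ : Γ, γ * h = h * γ)
    (π : Γ →* Γb)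
    (hker : π.ker = Subgroup.zpowers h)
    (P : OrbifoldPresentation Γb)
    (ρ : Γ →* (ℝ ≃ₜ ℝ)) (hρh : ∀ x : ℝ, ρ h x = x + 1)
    (μ : Set S1) (k : ℕ) (T : TauData μ k) (σg : Γb →* Equiv.Perm (Gap μ))
    (ρb : Γb →* (S1 ≃ₜ S1))
    (hlift : ∀ (γ : Γ) (x : ℝ), ρb (π γ) ((x : ℝ) : S1) = ((ρ γ x : ℝ) : S1))
    (I₀ : Gap μ)
    (i : Fin P.q)
    (f₀ : S1 → S1)
    (ρb' : Γb →* (S1 ≃ₜ S1))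
    (hmod : IsModification ρb ρb' μ k T σg I₀ (P.c i) f₀) :
    ∃! ρs : Γ →* (ℝ ≃ₜ ℝ),
      (∀ x : ℝ, ρs h x = x + 1) ∧
      (∀ (γ : Γ) (x : ℝ), ρb' (π γ) ((x : ℝ) : S1) = ((ρs γ x : ℝ) : S1)) ∧
      (∀ (γ : Γ) (x : ℝ), ((x : ℝ) : S1) ∈ μ → ρs γ x = ρ γ x) := by
  have hrep := hmod.rep'
  set C := (gapOrbit σg I₀)ᶜ
  have hμC : μ ⊆ C := subset_compl_gapOrbit I₀
  obtain ⟨s, hsμ, hs3⟩ := (hrep.perfect.infinite hrep.nonempty).exists_subset_ncard_eq 3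
  obtain ⟨a, b, c, hab, hac, hbc, rfl⟩ := Set.ncard_eq_three.1 hs3.2
  have hρ1 (γ : Γ) (x : ℝ) : ρ γ (x + 1) = ρ γ x + 1 := by
    rw [← hρh, ← homeo_mul_apply, ← map_mul, hcentral, map_mul, homeo_mul_apply, hρh]
  have horient (γ : Γ) : OrientPres (ρb' (π γ)) :=
    (orientPres_of_isLiftOf (strictMono_of_map_add_one _ (hρ1 γ)) (hρ1 γ)
      fun x => (hlift γ x).symm).of_eqOn (hrep.orient (π γ)) hab hbc hac
      fun x hx => (hmod.eq_off _ x (hμC (hsμ hx))).symm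
  have H : LiftsOver ρ (ρb'.comp π) C :=
    { isClosed := (isOpen_gapOrbit hrep.perfect.closed I₀).isClosed_compl
      nontrivial := ⟨a, hμC (hsμ (by simp)), b, hμC (hsμ (by simp)), hab⟩
      map_add_one := hρ1
      mapsTo := fun γ => hrep.mapsTo_compl_gapOrbit I₀ (π γ)
      apply_coe := fun γ t ht => (hmod.eq_off _ _ ht).trans (hlift γ t)
      orientPres := horient }
  obtain ⟨ρs, hρs_lift, hρs_C⟩ := H.exists_monoidHom
  obtain ⟨s₀, hs₀⟩ := hrep.nonempty
  obtain ⟨t₀, rfl⟩ := QuotientAddGroup.mk_surjective s₀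
  have hρs_h : ⇑(ρs h) = (· + 1) := by
    refine IsLiftOf.eq_of_apply_eq (ρs h).continuous (continuous_add_const 1) (hρs_lift h)
      (fun y => ?_) (t := t₀) (by rw [hρs_C h t₀ (hμC hs₀), hρh])
    have hπh : π h = 1 := (hker ▸ Subgroup.mem_zpowers h : h ∈ π.ker)
    rw [MonoidHom.comp_apply, hπh, map_one, homeo_one_apply, AddCircle.coe_add_period]
  refine ⟨ρs, ⟨congrFun hρs_h, fun γ x => (hρs_lift γ x).symm,
    fun γ x hx => hρs_C γ x (hμC hx)⟩, ?_⟩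
  rintro ρt ⟨-, hρt_lift, hρt_μ⟩
  ext γ x
  exact congrFun (IsLiftOf.eq_of_apply_eq (ρt γ).continuous (ρs γ).continuous
    (fun y => (hρt_lift γ y).symm) (hρs_lift γ) (by rw [hρt_μ γ t₀ hs₀, hρs_C γ t₀ (hμC hs₀)])) x

open PAFlow in
/-- a representation `ρ : Γ → Homeo(ℝ)` with `ρ(h)` the unit translation
induces a `(μ,τ,σ)`-representation of `Γ̄ = Γ/⟨h⟩` on `ℝ/ℤ`; every modification of the
induced representation on a periodic gap lifts to a representation of `Γ` on the line,
uniquely determined by agreeing with `ρ` on the preimage `μ̃` of `μ`. -/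
theorem statement11 {Γ Γb : Type} [Group Γ] [Group Γb]
    (h : Γ) (hcentral : ∀ γ : Γ, γ * h = h * γ)
    (π : Γ →* Γb) (hsurj : Function.Surjective π)
    (hker : π.ker = Subgroup.zpowers h)
    (P : OrbifoldPresentation Γb)
    (ρ : Γ →* (ℝ ≃ₜ ℝ)) (hρh : ∀ x : ℝ, ρ h x = x + 1)
    (μ : Set S1) (k : ℕ) (T : TauData μ k) (σg : Γb →* Equiv.Perm (Gap μ))
    (ρb : Γb →* (S1 ≃ₜ S1)) (hrep : IsMTSRep ρb μ k T σg)
    (hlift : ∀ (γ : Γ) (x : ℝ), ρb (π γ) ((x : ℝ) : S1) = ((ρ γ x : ℝ) : S1))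
    (I₀ : Gap μ) (hper : gapStab σg I₀ ≠ ⊥)
    (i : Fin P.q) (hstab : gapStab σg I₀ = Subgroup.zpowers (P.c i))
    (f₀ : S1 → S1) (hf₀ : IsClosureHomeo f₀ (I₀ : Set S1))
    (hbd : ∀ x ∈ frontier (I₀ : Set S1), f₀ x = ρb (P.c i) x)
    (ρb' : Γb →* (S1 ≃ₜ S1))
    (hmod : IsModification ρb ρb' μ k T σg I₀ (P.c i) f₀) :
    ∃! ρs : Γ →* (ℝ ≃ₜ ℝ),
      (∀ x : ℝ, ρs h x = x + 1) ∧
      (∀ (γ : Γ) (x : ℝ), ρb' (π γ) ((x : ℝ) : S1) = ((ρs γ x : ℝ) : S1)) ∧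
      (∀ (γ : Γ) (x : ℝ), ((x : ℝ) : S1) ∈ μ → ρs γ x = ρ γ x) :=
  statement11_general h hcentral π hker P ρ hρh μ k T σg ρb hlift I₀ i f₀ ρb' hmod
end
end
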